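/- In the Hermitian dilation setup, the matrix H^d = V^d_⊥(V^d_⊥)ᵀE^dV^d satisfies ‖H^d‖_w ≤ (1 + rμ_0)·κ_0. -/

import Mathlib

open Matrix BigOperators

/-- Entrywise max norm: largest absolute value of an entry. -/
noncomputable def matMaxNorm {m n : Type*} [Fintype m] [Fintype n] (M : Matrix m n ℝ) : ℝ :=
  ⨆ i, ⨆ j, |M i j|

/-- Matrix ∞-norm: maximum absolute row sum. -/
noncomputable def matInfNorm {m n : Type*} [Fintype m] [Fintype n] (M : Matrix m n ℝ) : ℝ :=
  ⨆ i, ∑ j, |M i j|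

/-- Matrix 1-norm: maximum absolute column sum. -/
noncomputable def matOneNorm {m n : Type*} [Fintype m] [Fintype n] (M : Matrix m n ℝ) : ℝ :=
  ⨆ j, ∑ i, |M i j|

/-- Euclidean norm of a vector. -/
noncomputable def vec2Norm {n : Type*} [Fintype n] (x : n → ℝ) : ℝ :=
  Real.sqrt (∑ i, (x i) ^ 2)

/-- ℓ∞ norm of a vector. -/
noncomputable def vecSupNorm {n : Type*} [Fintype n] (x : n → ℝ) : ℝ :=
  ⨆ i, |x i|

/-- Spectral norm (operator 2-norm) of a matrix. -/
noncomputable def matSpecNorm {m n : Type*} [Fintype m] [Fintype n] (M : Matrix m n ℝ) : ℝ :=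
  sSup {c : ℝ | ∃ x : n → ℝ, vec2Norm x ≤ 1 ∧ c = vec2Norm (M.mulVec x)}

/-- Coherence of a d × r matrix with orthonormal columns. -/
noncomputable def matCoherence {d r : ℕ} (V : Matrix (Fin d) (Fin r) ℝ) : ℝ :=
  ((d : ℝ) / (r : ℝ)) * ⨆ i, ∑ j, (V i j) ^ 2

/-- Inverse of the positive semidefinite square root of a matrix (junk value otherwise). -/
noncomputable def matInvSqrt {n : Type*} [Fintype n] [DecidableEq n] (S : Matrix n n ℝ) :
    Matrix n n ℝ :=
  letI := Classical.propDecidable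
  if h : S.PosSemidef then
    (h.1.eigenvectorUnitary.1 * diagonal ((↑) ∘ (√·) ∘ h.1.eigenvalues) *
      (star h.1.eigenvectorUnitary : Matrix n n ℝ))⁻¹ else 0

/-- Weighted max-norm for matrices with d₁ + d₂ rows. -/
noncomputable def wMaxNorm {d₁ d₂ : ℕ} {n : Type*} [Fintype n]
    (M : Matrix (Fin d₁ ⊕ Fin d₂) n ℝ) : ℝ :=
  matMaxNorm (Matrix.of fun i j =>
    (Sum.elim (fun _ : Fin d₁ => Real.sqrt d₁) (fun _ : Fin d₂ => Real.sqrt d₂) i) * M i j)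

/-- Huber loss with parameter α. -/
noncomputable def huberLoss (α x : ℝ) : ℝ := if |x| ≤ α then x ^ 2 else 2 * α * |x| - α ^ 2

/- The complement of the dilated singular basis is `1 - V^d V^dᵀ = diag(1 - UUᵀ, 1 - VVᵀ)`, so
`H^d` has blocks `±(1/√2)(1 - UUᵀ)EV` and `(1/√2)(1 - VVᵀ)EᵀU`. An entry of `UUᵀX` is bounded by
Cauchy–Schwarz against the `a`-th row of `UUᵀ`, whose squared norm is `Σₗ U_{al}² ≤ rμ₀/d`; this
gives `√d·|((1 - UUᵀ)X)_{aj}| ≤ (1 + √(rμ₀))·√d‖X‖_max`, and `(1 + √t)/√2 ≤ 1 + t` finishes. -/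

lemma abs_le_matMaxNorm {m n : Type*} [Fintype m] [Fintype n] (M : Matrix m n ℝ) (i : m) (j : n) :
    |M i j| ≤ matMaxNorm M :=
  (le_ciSup (f := fun j => |M i j|) (Set.finite_range _).bddAbove j).trans
    (le_ciSup (f := fun i => ⨆ j, |M i j|) (Set.finite_range _).bddAbove i)

lemma matMaxNorm_nonneg {m n : Type*} [Fintype m] [Fintype n] (M : Matrix m n ℝ) :
    0 ≤ matMaxNorm M :=
  Real.iSup_nonneg fun _ => Real.iSup_nonneg fun _ => abs_nonneg _

lemma matCoherence_nonneg {d r : ℕ} (U : Matrix (Fin d) (Fin r) ℝ) : 0 ≤ matCoherence U :=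
  mul_nonneg (by positivity) (Real.iSup_nonneg fun _ => Finset.sum_nonneg fun _ _ => sq_nonneg _)

lemma mul_sum_sq_le_mul_matCoherence {d r : ℕ} (U : Matrix (Fin d) (Fin r) ℝ) (a : Fin d) :
    d * ∑ l, U a l ^ 2 ≤ r * matCoherence U := by
  rcases Nat.eq_zero_or_pos r with rfl | hr
  · simp
  · have hrow := le_ciSup (f := fun i => ∑ l, U i l ^ 2) (Set.finite_range _).bddAbove a
    rw [matCoherence, ← mul_assoc, mul_div_cancel₀ _ (by positivity)]
    gcongr

lemma wMaxNorm_le {d₁ d₂ : ℕ} {n : Type*} [Fintype n] {M : Matrix (Fin d₁ ⊕ Fin d₂) n ℝ}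
    {c : ℝ} (hc : 0 ≤ c) (h₁ : ∀ a j, √d₁ * |M (.inl a) j| ≤ c)
    (h₂ : ∀ a j, √d₂ * |M (.inr a) j| ≤ c) : wMaxNorm M ≤ c := by
  refine Real.iSup_le (fun i => Real.iSup_le (fun j => ?_) hc) hc
  rcases i with a | a
  · simpa [abs_mul, abs_of_nonneg (Real.sqrt_nonneg _)] using h₁ a j
  · simpa [abs_mul, abs_of_nonneg (Real.sqrt_nonneg _)] using h₂ a j

lemma sum_sq_mul_transpose_apply {m n : Type*} [Fintype m] [Fintype n] [DecidableEq n]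
    {U : Matrix m n ℝ} (hU : Uᵀ * U = 1) (a : m) :
    ∑ b, (U * Uᵀ) a b ^ 2 = ∑ l, U a l ^ 2 := by
  have hproj : (U * Uᵀ) * (U * Uᵀ)ᵀ = U * Uᵀ := by
    rw [transpose_mul, transpose_transpose, Matrix.mul_assoc, ← Matrix.mul_assoc Uᵀ, hU,
      Matrix.one_mul]
  simpa [mul_apply, sq, mul_comm] using congrFun (congrFun hproj a) a

lemma inv_sqrt_two_mul_one_add_sqrt_le {t : ℝ} (ht : 0 ≤ t) : (√2)⁻¹ * (1 + √t) ≤ 1 + t := by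
  rw [inv_mul_le_iff₀ (by positivity)]
  -- `(1 + √t)² ≤ 2(1 + t) ≤ 2(1 + t)²` by AM–GM
  have hsq : (1 + √t) ^ 2 ≤ (√2 * (1 + t)) ^ 2 := by
    rw [mul_pow, Real.sq_sqrt (by norm_num)]
    nlinarith [sq_nonneg (√t - 1), Real.sq_sqrt ht]
  exact (le_abs_self _).trans (abs_le_of_sq_le_sq hsq (by positivity))

section Coherence

variable {d r : ℕ} {n : Type*} [Fintype n] {U : Matrix (Fin d) (Fin r) ℝ}

lemma sqrt_mul_abs_proj_apply_le (hU : Uᵀ * U = 1) (X : Matrix (Fin d) n ℝ) (a : Fin d)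
    (j : n) : √d * |(U * (Uᵀ * X)) a j| ≤ √(r * matCoherence U) * (√d * matMaxNorm X) := by
  have hcol : ∑ b, X b j ^ 2 ≤ d * matMaxNorm X ^ 2 := by
    calc ∑ b, X b j ^ 2 ≤ ∑ _b : Fin d, matMaxNorm X ^ 2 :=
          Finset.sum_le_sum fun b _ => by
            rw [← sq_abs]; exact pow_le_pow_left₀ (abs_nonneg _) (abs_le_matMaxNorm X b j) 2
      _ = d * matMaxNorm X ^ 2 := by simp
  have hcoh := matCoherence_nonneg U
  have hsq : (√d * (U * (Uᵀ * X)) a j) ^ 2 ≤ (√(r * matCoherence U) * (√d * matMaxNorm X)) ^ 2 :=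
  calc (√d * (U * (Uᵀ * X)) a j) ^ 2 = d * (∑ b, (U * Uᵀ) a b * X b j) ^ 2 := by
        rw [mul_pow, Real.sq_sqrt (Nat.cast_nonneg _), ← Matrix.mul_assoc, mul_apply]
    _ ≤ d * ((∑ l, U a l ^ 2) * ∑ b, X b j ^ 2) := by
        rw [← sum_sq_mul_transpose_apply hU a]
        gcongr
        exact Finset.sum_mul_sq_le_sq_mul_sq _ _ _
    _ = (d * ∑ l, U a l ^ 2) * ∑ b, X b j ^ 2 := by ring
    _ ≤ (r * matCoherence U) * (d * matMaxNorm X ^ 2) :=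
        mul_le_mul (mul_sum_sq_le_mul_matCoherence U a) hcol
          (Finset.sum_nonneg fun _ _ => sq_nonneg _) (by positivity)
    _ = (√(r * matCoherence U) * (√d * matMaxNorm X)) ^ 2 := by
        rw [mul_pow, mul_pow, Real.sq_sqrt (by positivity), Real.sq_sqrt (Nat.cast_nonneg _)]
  calc √d * |(U * (Uᵀ * X)) a j| = |√d * (U * (Uᵀ * X)) a j| := by
        rw [abs_mul, abs_of_nonneg (Real.sqrt_nonneg _)]
    _ ≤ √(r * matCoherence U) * (√d * matMaxNorm X) :=
        abs_le_of_sq_le_sq hsq (by have := matMaxNorm_nonneg X; positivity)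

lemma sqrt_mul_abs_sub_proj_apply_le (hU : Uᵀ * U = 1) (X : Matrix (Fin d) n ℝ) (a : Fin d)
    (j : n) :
    √d * |(X - U * (Uᵀ * X)) a j| ≤ (1 + √(r * matCoherence U)) * (√d * matMaxNorm X) :=
  calc √d * |(X - U * (Uᵀ * X)) a j| ≤ √d * |X a j| + √d * |(U * (Uᵀ * X)) a j| := by
        rw [← mul_add, Matrix.sub_apply]; gcongr; exact abs_sub _ _
    _ ≤ √d * matMaxNorm X + √(r * matCoherence U) * (√d * matMaxNorm X) :=
        add_le_add (by gcongr; exact abs_le_matMaxNorm X a j) (sqrt_mul_abs_proj_apply_le hU X a j)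
    _ = (1 + √(r * matCoherence U)) * (√d * matMaxNorm X) := by ring

lemma inv_sqrt_two_mul_sqrt_mul_abs_sub_proj_apply_le (hU : Uᵀ * U = 1) {X : Matrix (Fin d) n ℝ}
    {μ κ : ℝ} (hμ : matCoherence U ≤ μ) (hκ : √d * matMaxNorm X ≤ κ) (a : Fin d) (j : n) :
    (√2)⁻¹ * (√d * |(X - U * (Uᵀ * X)) a j|) ≤ (1 + r * μ) * κ := by
  have hμ_nonneg : 0 ≤ μ := (matCoherence_nonneg U).trans hμ
  have hκ_nonneg : 0 ≤ κ := (mul_nonneg (Real.sqrt_nonneg _) (matMaxNorm_nonneg X)).trans hκ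
  calc (√2)⁻¹ * (√d * |(X - U * (Uᵀ * X)) a j|) ≤ (√2)⁻¹ * ((1 + √(r * μ)) * κ) := by
        refine mul_le_mul_of_nonneg_left ?_ (by positivity)
        exact (sqrt_mul_abs_sub_proj_apply_le hU X a j).trans
          (mul_le_mul (by gcongr) hκ
            (mul_nonneg (Real.sqrt_nonneg _) (matMaxNorm_nonneg X)) (by positivity))
    _ = ((√2)⁻¹ * (1 + √(r * μ))) * κ := by ring
    _ ≤ (1 + r * μ) * κ := by gcongr; exact inv_sqrt_two_mul_one_add_sqrt_le (by positivity)

end Coherence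

lemma transpose_mul_self_of_orthonormal {ι κ m : Type*} [Fintype m] [DecidableEq ι]
    [DecidableEq κ] {u : ι → m → ℝ} (hu : ∀ i j, ∑ k, u i k * u j k = if i = j then 1 else 0)
    {f : κ → ι} (hf : Function.Injective f) :
    (of fun a k => u (f k) a)ᵀ * (of fun a k => u (f k) a) = 1 := by
  ext k l
  simp [mul_apply, one_apply, hu, hf.eq_iff]

lemma mul_transpose_add_mul_transpose_eq_one {R m n₁ n₂ : Type*} [CommRing R] [Fintype m]
    [DecidableEq m] [Fintype n₁] [DecidableEq n₁] [Fintype n₂] [DecidableEq n₂]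
    (hcard : Fintype.card m = Fintype.card n₁ + Fintype.card n₂) {Q₁ : Matrix m n₁ R}
    {Q₂ : Matrix m n₂ R} (h₁ : Q₁ᵀ * Q₁ = 1) (h₂ : Q₂ᵀ * Q₂ = 1) (h₁₂ : Q₁ᵀ * Q₂ = 0) :
    Q₁ * Q₁ᵀ + Q₂ * Q₂ᵀ = 1 := by
  have e : m ≃ n₁ ⊕ n₂ := Fintype.equivOfCardEq (by rw [hcard, Fintype.card_sum])
  have h₂₁ : Q₂ᵀ * Q₁ = 0 := by simpa using congrArg transpose h₁₂
  rw [← fromCols_mul_fromRows, fromCols_mul_fromRows_eq_one_comm e, fromRows_mul_fromCols, h₁, h₂,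
    h₁₂, h₂₁, fromBlocks_one]

lemma hermDilation_mul_dilation {m₁ m₂ k : Type*} [Fintype m₁] [Fintype m₂]
    (U : Matrix m₁ k ℝ) (V : Matrix m₂ k ℝ) (E : Matrix m₁ m₂ ℝ) :
    fromBlocks 0 E Eᵀ 0 * ((√2)⁻¹ • fromBlocks U U V (-V)) =
      (√2)⁻¹ • fromBlocks (E * V) (-(E * V)) (Eᵀ * U) (Eᵀ * U) := by
  rw [Matrix.mul_smul, fromBlocks_multiply]
  simp

lemma dilation_mul_transpose_self {m₁ m₂ k : Type*} [Fintype k] (U : Matrix m₁ k ℝ)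
    (V : Matrix m₂ k ℝ) :
    ((√2)⁻¹ • fromBlocks U U V (-V)) * ((√2)⁻¹ • fromBlocks U U V (-V))ᵀ =
      fromBlocks (U * Uᵀ) 0 0 (V * Vᵀ) := by
  rw [transpose_smul, Matrix.smul_mul, Matrix.mul_smul, smul_smul,
    TsirelsonInequality.sqrt_two_inv_mul_self, fromBlocks_transpose, fromBlocks_multiply]
  ext (i | i) (j | j) <;> simp <;> ring

lemma dilation_transpose_mul_self {m₁ m₂ k : Type*} [Fintype m₁] [Fintype m₂] [DecidableEq k]
    {U : Matrix m₁ k ℝ} {V : Matrix m₂ k ℝ} (hU : Uᵀ * U = 1) (hV : Vᵀ * V = 1) :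
    ((√2)⁻¹ • fromBlocks U U V (-V))ᵀ * ((√2)⁻¹ • fromBlocks U U V (-V)) = 1 := by
  rw [transpose_smul, Matrix.smul_mul, Matrix.mul_smul, smul_smul,
    TsirelsonInequality.sqrt_two_inv_mul_self, fromBlocks_transpose, fromBlocks_multiply]
  ext (i | i) (j | j) <;> simp [hU, hV, one_apply] <;> ring

lemma complement_proj_mul_hermDilation_mul_dilation {m₁ m₂ k p : Type*} [Fintype m₁]
    [DecidableEq m₁] [Fintype m₂] [DecidableEq m₂] [Fintype k] [DecidableEq k] [Fintype p]
    [DecidableEq p] {U : Matrix m₁ k ℝ} {V : Matrix m₂ k ℝ} (hU : Uᵀ * U = 1) (hV : Vᵀ * V = 1)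
    {W : Matrix (m₁ ⊕ m₂) p ℝ}
    (hcard : Fintype.card (m₁ ⊕ m₂) = Fintype.card (k ⊕ k) + Fintype.card p)
    (hW : Wᵀ * W = 1) (hVW : ((√2)⁻¹ • fromBlocks U U V (-V))ᵀ * W = 0) (E : Matrix m₁ m₂ ℝ) :
    W * (Wᵀ * fromBlocks 0 E Eᵀ 0 * ((√2)⁻¹ • fromBlocks U U V (-V))) =
      (√2)⁻¹ • fromBlocks (E * V - U * (Uᵀ * (E * V))) (-(E * V - U * (Uᵀ * (E * V))))
        (Eᵀ * U - V * (Vᵀ * (Eᵀ * U))) (Eᵀ * U - V * (Vᵀ * (Eᵀ * U))) := by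
  have hWWt : W * Wᵀ = 1 - fromBlocks (U * Uᵀ) 0 0 (V * Vᵀ) := by
    rw [← dilation_mul_transpose_self, ← mul_transpose_add_mul_transpose_eq_one hcard
      (dilation_transpose_mul_self hU hV) hW hVW, add_sub_cancel_left]
  rw [Matrix.mul_assoc, ← Matrix.mul_assoc W, hWWt, hermDilation_mul_dilation, Matrix.mul_smul,
    Matrix.sub_mul, Matrix.one_mul, fromBlocks_multiply]
  ext (i | i) (j | j) <;> simp [Matrix.mul_assoc]
  ring

theorem dilated_H_weighted_norm_bound_general
    (d₁ d₂ r : ℕ) (hrm : r ≤ min d₁ d₂)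
    (E : Matrix (Fin d₁) (Fin d₂) ℝ)
    (u : Fin (min d₁ d₂) → Fin d₁ → ℝ)
    (v : Fin (min d₁ d₂) → Fin d₂ → ℝ)
    (hu : ∀ i j, ∑ k, u i k * u j k = if i = j then (1 : ℝ) else 0)
    (hv : ∀ i j, ∑ k, v i k * v j k = if i = j then (1 : ℝ) else 0)
    (U : Matrix (Fin d₁) (Fin r) ℝ) (hU : U = Matrix.of fun a k => u (Fin.castLE hrm k) a)
    (V : Matrix (Fin d₂) (Fin r) ℝ) (hV : V = Matrix.of fun b k => v (Fin.castLE hrm k) b)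
    (μ₀ κ₀ : ℝ)
    (hμ₀ : μ₀ = max (matCoherence U) (matCoherence V))
    (hκ₀ : κ₀ = max (Real.sqrt d₁ * matMaxNorm (E * V))
                    (Real.sqrt d₂ * matMaxNorm (Eᵀ * U)))
    (Ed : Matrix (Fin d₁ ⊕ Fin d₂) (Fin d₁ ⊕ Fin d₂) ℝ)
    (hEd : Ed = Matrix.fromBlocks 0 E Eᵀ 0)
    (Vd : Matrix (Fin d₁ ⊕ Fin d₂) (Fin r ⊕ Fin r) ℝ)
    (hVd : Vd = (Real.sqrt 2)⁻¹ • Matrix.fromBlocks U U V (-V))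
    (Vdp : Matrix (Fin d₁ ⊕ Fin d₂) (Fin (d₁ + d₂ - 2 * r)) ℝ)
    (hVdp1 : Vdpᵀ * Vdp = 1) (hVdp2 : Vdᵀ * Vdp = 0)
    (Hd : Matrix (Fin d₁ ⊕ Fin d₂) (Fin r ⊕ Fin r) ℝ)
    (hHd : Hd = Vdp * (Vdpᵀ * Ed * Vd))
    : wMaxNorm Hd ≤ (1 + (r : ℝ) * μ₀) * κ₀ := by
  have hUU : Uᵀ * U = 1 := hU ▸ transpose_mul_self_of_orthonormal hu (Fin.castLE_injective hrm)
  have hVV : Vᵀ * V = 1 := hV ▸ transpose_mul_self_of_orthonormal hv (Fin.castLE_injective hrm)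
  have hcard : Fintype.card (Fin d₁ ⊕ Fin d₂) =
      Fintype.card (Fin r ⊕ Fin r) + Fintype.card (Fin (d₁ + d₂ - 2 * r)) := by
    simp only [Fintype.card_sum, Fintype.card_fin]
    omega
  subst hEd hVd hHd
  rw [complement_proj_mul_hermDilation_mul_dilation hUU hVV hcard hVdp1 hVdp2]
  have hμ₀_nonneg : 0 ≤ μ₀ := hμ₀ ▸ (matCoherence_nonneg U).trans (le_max_left _ _)
  have hκ₀_nonneg : 0 ≤ κ₀ :=
    hκ₀ ▸ (mul_nonneg (Real.sqrt_nonneg _) (matMaxNorm_nonneg _)).trans (le_max_left _ _)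
  have hbound₁ := inv_sqrt_two_mul_sqrt_mul_abs_sub_proj_apply_le hUU
    (hμ₀ ▸ le_max_left _ _) (hκ₀ ▸ le_max_left _ _)
  have hbound₂ := inv_sqrt_two_mul_sqrt_mul_abs_sub_proj_apply_le hVV
    (hμ₀ ▸ le_max_right _ _) (hκ₀ ▸ le_max_right _ _)
  refine wMaxNorm_le (by positivity) (fun a j => ?_) (fun a j => ?_) <;> rcases j with j | j <;>
    simp only [Matrix.smul_apply, fromBlocks_apply₁₁, fromBlocks_apply₁₂, fromBlocks_apply₂₁,
      fromBlocks_apply₂₂, Matrix.neg_apply, smul_eq_mul, abs_mul, abs_neg,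
      abs_of_pos (inv_pos.2 (Real.sqrt_pos.2 two_pos)), mul_left_comm (√(_ : ℕ))]
  exacts [hbound₁ a j, hbound₁ a j, hbound₂ a j, hbound₂ a j]

/-- Weighted max-norm bound on H^d (Lemma B.1 of Fan–Wang–Zhong). -/
theorem dilated_H_weighted_norm_bound
    (d₁ d₂ r : ℕ) (hd₁ : 0 < d₁) (hd₂ : 0 < d₂) (hr : 0 < r) (hrm : r ≤ min d₁ d₂)
    (A E : Matrix (Fin d₁) (Fin d₂) ℝ)
    (σ : Fin (min d₁ d₂) → ℝ) (u : Fin (min d₁ d₂) → Fin d₁ → ℝ)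
    (v : Fin (min d₁ d₂) → Fin d₂ → ℝ)
    (hrank : (r : ℕ) ≤ A.rank)
    (hu : ∀ i j, ∑ k, u i k * u j k = if i = j then (1 : ℝ) else 0)
    (hv : ∀ i j, ∑ k, v i k * v j k = if i = j then (1 : ℝ) else 0)
    (hσpos : ∀ i, 0 ≤ σ i)
    (hσdec : ∀ i j : Fin (min d₁ d₂), i ≤ j → σ j ≤ σ i)
    (hA : ∀ a b, A a b = ∑ k, σ k * u k a * v k b)
    (U : Matrix (Fin d₁) (Fin r) ℝ) (hU : U = Matrix.of fun a k => u (Fin.castLE hrm k) a)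
    (V : Matrix (Fin d₂) (Fin r) ℝ) (hV : V = Matrix.of fun b k => v (Fin.castLE hrm k) b)
    (Ar : Matrix (Fin d₁) (Fin d₂) ℝ)
    (hAr : Ar = Matrix.of fun a b => ∑ k : Fin r,
      σ (Fin.castLE hrm k) * u (Fin.castLE hrm k) a * v (Fin.castLE hrm k) b)
    (μ₀ τ₀ ε₀ κ₀ : ℝ)
    (hμ₀ : μ₀ = max (matCoherence U) (matCoherence V))
    (hτ₀ : τ₀ = max (Real.sqrt ((d₁ : ℝ) / (d₂ : ℝ)) * matInfNorm E)
                    (Real.sqrt ((d₂ : ℝ) / (d₁ : ℝ)) * matOneNorm E))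
    (hε₀ : ε₀ = max (Real.sqrt ((d₁ : ℝ) / (d₂ : ℝ)) * matInfNorm (A - Ar))
                    (Real.sqrt ((d₂ : ℝ) / (d₁ : ℝ)) * matOneNorm (A - Ar)))
    (hκ₀ : κ₀ = max (Real.sqrt d₁ * matMaxNorm (E * V))
                    (Real.sqrt d₂ * matMaxNorm (Eᵀ * U)))
    (Ad Ed : Matrix (Fin d₁ ⊕ Fin d₂) (Fin d₁ ⊕ Fin d₂) ℝ)
    (hAd : Ad = Matrix.fromBlocks 0 A Aᵀ 0)
    (hEd : Ed = Matrix.fromBlocks 0 E Eᵀ 0)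
    (Vd : Matrix (Fin d₁ ⊕ Fin d₂) (Fin r ⊕ Fin r) ℝ)
    (hVd : Vd = (Real.sqrt 2)⁻¹ • Matrix.fromBlocks U U V (-V))
    (Vdp : Matrix (Fin d₁ ⊕ Fin d₂) (Fin (d₁ + d₂ - 2 * r)) ℝ)
    (hVdp1 : Vdpᵀ * Vdp = 1) (hVdp2 : Vdᵀ * Vdp = 0)
    (Lam₁d : Matrix (Fin r ⊕ Fin r) (Fin r ⊕ Fin r) ℝ)
    (hLam₁d : Lam₁d = Matrix.diagonal (Sum.elim
      (fun i : Fin r => σ (Fin.castLE hrm i)) (fun i : Fin r => -σ (Fin.castLE hrm i))))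
    (Hd : Matrix (Fin d₁ ⊕ Fin d₂) (Fin r ⊕ Fin r) ℝ)
    (hHd : Hd = Vdp * (Vdpᵀ * Ed * Vd))
    (L₁d : Matrix (Fin r ⊕ Fin r) (Fin r ⊕ Fin r) ℝ)
    (hL₁d : L₁d = Lam₁d + Vdᵀ * Ed * Vd)
    (L₂d : Matrix (Fin d₁ ⊕ Fin d₂) (Fin d₁ ⊕ Fin d₂) ℝ)
    (hL₂d : L₂d = Vdp * (Vdpᵀ * (Ad + Ed) * Vdp) * Vdpᵀ)
    : wMaxNorm Hd ≤ (1 + (r : ℝ) * μ₀) * κ₀ :=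
  dilated_H_weighted_norm_bound_general d₁ d₂ r hrm E u v hu hv U hU V hV μ₀ κ₀ hμ₀ hκ₀ Ed hEd Vd
    hVd Vdp hVdp1 hVdp2 Hd hHd
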